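/- arXiv:2404.16554 — 5 statements merged into one kernel-verified Lean document; each statement's English description precedes it below -/
import Mathlib

section
/- One step of the implicit (backward Euler) scheme satisfies: ‖uⁿ‖_L² ≤ ‖uⁿ⁻¹‖_L² + (τ/2) (fⁿ)ᵀ (C + (τ/2) L)⁻¹ fⁿ. (Here C + (τ/2)L is symmetric positive definite, hence invertible.) -/
/-!
With `w = (uⁿ - uⁿ⁻¹)/τ` the scheme reads `C w + L uⁿ = fⁿ`, and expanding `uⁿ⁻¹ = uⁿ - τ w` gives
`‖uⁿ⁻¹‖_L² = ‖uⁿ‖_L² - 2τ wᵀL uⁿ + τ² ‖w‖_L²`. The cross term is controlled by Young's inequality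
for the form of `M = C + (τ/2) L`, namely `2 xᵀf - xᵀM x ≤ fᵀM⁻¹f`: tested at `x = 2w`,
the `C`-terms cancel and it is exactly the claimed bound.
-/

open Matrix

namespace Matrix

variable {n : Type*} [Fintype n]

lemma IsSymm.dotProduct_mulVec_comm {A : Matrix n n ℝ} (hA : A.IsSymm) (x y : n → ℝ) :
    x ⬝ᵥ (A *ᵥ y) = y ⬝ᵥ (A *ᵥ x) := by
  rw [dotProduct_mulVec, ← mulVec_transpose, hA.eq, dotProduct_comm]

lemma IsSymm.dotProduct_mulVec_sub_sub {A : Matrix n n ℝ} (hA : A.IsSymm) (x y : n → ℝ) :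
    (x - y) ⬝ᵥ (A *ᵥ (x - y)) =
      x ⬝ᵥ (A *ᵥ x) - 2 * (x ⬝ᵥ (A *ᵥ y)) + y ⬝ᵥ (A *ᵥ y) := by
  rw [mulVec_sub, dotProduct_sub, sub_dotProduct, sub_dotProduct, hA.dotProduct_mulVec_comm y x]
  ring

lemma PosDef.two_mul_dotProduct_sub_le_dotProduct_inv_mulVec [DecidableEq n]
    {M : Matrix n n ℝ} (hM : M.PosDef) (x f : n → ℝ) :
    2 * (x ⬝ᵥ f) - x ⬝ᵥ (M *ᵥ x) ≤ f ⬝ᵥ (M⁻¹ *ᵥ f) := by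
  have hMsymm : M.IsSymm := by simpa [IsSymm] using hM.isHermitian
  set g := M⁻¹ *ᵥ f
  have hMg : M *ᵥ g = f := by
    rw [mulVec_mulVec, mul_nonsing_inv _ ((isUnit_iff_isUnit_det M).mp hM.isUnit), one_mulVec]
  have hnonneg : 0 ≤ (x - g) ⬝ᵥ (M *ᵥ (x - g)) := by
    simpa using hM.posSemidef.dotProduct_mulVec_nonneg (x - g)
  rw [hMsymm.dotProduct_mulVec_sub_sub, hMg, dotProduct_comm g f] at hnonneg
  linarith

end Matrix

theorem backward_euler_one_step_stability_general (N : ℕ)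
    (C L : Matrix (Fin N) (Fin N) ℝ) (hC : C.PosDef) (hL : L.PosSemidef)
    (τ : ℝ) (hτ : 0 < τ)
    (uPrev uCur fn : Fin N → ℝ)
    (heq : C *ᵥ (τ⁻¹ • (uCur - uPrev)) + L *ᵥ uCur = fn) :
    uCur ⬝ᵥ (L *ᵥ uCur) ≤
      uPrev ⬝ᵥ (L *ᵥ uPrev) + (τ / 2) * (fn ⬝ᵥ ((C + (τ / 2) • L)⁻¹ *ᵥ fn)) := by
  set w := τ⁻¹ • (uCur - uPrev)
  have hLsymm : L.IsSymm := by simpa [IsSymm] using hL.isHermitian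
  have hprev : uPrev = uCur - τ • w := by
    rw [smul_smul, mul_inv_cancel₀ hτ.ne', one_smul, sub_sub_cancel]
  have hwf : w ⬝ᵥ fn = w ⬝ᵥ (C *ᵥ w) + uCur ⬝ᵥ (L *ᵥ w) := by
    rw [← heq, dotProduct_add, hLsymm.dotProduct_mulVec_comm]
  have hyoung := (hC.add_posSemidef (hL.smul (by positivity : 0 ≤ τ / 2))
    ).two_mul_dotProduct_sub_le_dotProduct_inv_mulVec ((2 : ℝ) • w) fn
  simp only [add_mulVec, smul_mulVec, mulVec_smul, dotProduct_add, dotProduct_smul,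
    smul_dotProduct, smul_eq_mul, hwf] at hyoung
  rw [hprev, hLsymm.dotProduct_mulVec_sub_sub]
  simp only [mulVec_smul, dotProduct_smul, smul_dotProduct, smul_eq_mul]
  linarith [mul_le_mul_of_nonneg_left hyoung hτ.le]

/-- One step of the implicit (backward Euler) scheme satisfies
`‖uⁿ‖_L² ≤ ‖uⁿ⁻¹‖_L² + (τ/2) (fⁿ)ᵀ (C + (τ/2)L)⁻¹ fⁿ`. -/
theorem backward_euler_one_step_stability (N : ℕ) (hN : 1 ≤ N)
    (C L : Matrix (Fin N) (Fin N) ℝ) (hC : C.PosDef) (hL : L.PosSemidef)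
    (τ : ℝ) (hτ : 0 < τ)
    (uPrev uCur fn : Fin N → ℝ)
    (heq : C *ᵥ (τ⁻¹ • (uCur - uPrev)) + L *ᵥ uCur = fn) :
    uCur ⬝ᵥ (L *ᵥ uCur) ≤
      uPrev ⬝ᵥ (L *ᵥ uPrev) + (τ / 2) * (fn ⬝ᵥ ((C + (τ / 2) • L)⁻¹ *ᵥ fn)) :=
  backward_euler_one_step_stability_general N C L hC hL τ hτ uPrev uCur fn heq
end

section
/- The solution of the fully discrete implicit scheme is unconditionally stable: for every n ≥ 1, ‖uⁿ‖_L² ≤ ‖u⁰‖_L² + (τ/2) Σ_{k=1}^n (fᵏ)ᵀ (C + (τ/2) L)⁻¹ fᵏ. -/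
/-!
Write `v = (uⁿ - uⁿ⁻¹)/τ`, `w = L (uⁿ + uⁿ⁻¹)/2` and `M = C + (τ/2) L`. Splitting
`L uⁿ = w + (τ/2) L v` turns the scheme into `M v = fⁿ - w`, and symmetry of `L` gives
`‖uⁿ‖_L² - ‖uⁿ⁻¹‖_L² = 2τ ⟨w, v⟩ = 2τ ⟨w, M⁻¹ (fⁿ - w)⟩`. As `M⁻¹` is positive semidefinite,
`0 ≤ ⟨fⁿ - 2w, M⁻¹ (fⁿ - 2w)⟩` bounds this by `(τ/2) ⟨fⁿ, M⁻¹ fⁿ⟩`, and the one-step bounds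
telescope.
-/

open Matrix

section

variable {ι : Type*} [Fintype ι]

theorem Matrix.IsSymm.dotProduct_mulVec_comm_s4 {R : Type*} [CommSemiring R] {A : Matrix ι ι R}
    (hA : A.IsSymm) (x y : ι → R) : x ⬝ᵥ A *ᵥ y = y ⬝ᵥ A *ᵥ x := by
  simpa only [hA.eq] using dotProduct_transpose_mulVec A x y

theorem Matrix.IsSymm.add_dotProduct_mulVec_sub {R : Type*} [CommRing R] {A : Matrix ι ι R}
    (hA : A.IsSymm) (x y : ι → R) :
    (x + y) ⬝ᵥ A *ᵥ (x - y) = x ⬝ᵥ A *ᵥ x - y ⬝ᵥ A *ᵥ y := by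
  rw [mulVec_sub, add_dotProduct, dotProduct_sub, dotProduct_sub, hA.dotProduct_mulVec_comm_s4 y x]
  ring

theorem Matrix.PosSemidef.four_mul_dotProduct_mulVec_sub_le {A : Matrix ι ι ℝ}
    (hA : A.PosSemidef) (x p : ι → ℝ) : 4 * (x ⬝ᵥ A *ᵥ (p - x)) ≤ p ⬝ᵥ A *ᵥ p := by
  have hsymm : A.IsSymm := isHermitian_iff_isSymm.mp hA.isHermitian
  have hexpand : (p - (2 : ℝ) • x) ⬝ᵥ A *ᵥ (p - (2 : ℝ) • x)
      = p ⬝ᵥ A *ᵥ p - 4 * (x ⬝ᵥ A *ᵥ (p - x)) := by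
    simp only [mulVec_sub, mulVec_smul, sub_dotProduct, dotProduct_sub, smul_dotProduct,
      dotProduct_smul, smul_eq_mul, hsymm.dotProduct_mulVec_comm_s4 p x]
    ring
  have hnonneg := hA.dotProduct_mulVec_nonneg (p - (2 : ℝ) • x)
  simp only [star_trivial] at hnonneg
  linarith

theorem backwardEuler_mulVec_eq_sub_midpoint {C L : Matrix ι ι ℝ} {τ : ℝ} (hτ : τ ≠ 0)
    {a b p : ι → ℝ} (h : C *ᵥ (τ⁻¹ • (a - b)) + L *ᵥ a = p) :
    (C + (τ / 2) • L) *ᵥ (τ⁻¹ • (a - b)) = p - L *ᵥ ((2 : ℝ)⁻¹ • (a + b)) := by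
  have hmid : (2 : ℝ)⁻¹ • (a + b) = a - (τ / 2) • τ⁻¹ • (a - b) := by
    have hcoef : τ / 2 * τ⁻¹ = 2⁻¹ := by field_simp
    rw [smul_smul, hcoef]
    module
  rw [← h, hmid]
  simp only [add_mulVec, smul_mulVec, mulVec_sub, mulVec_smul]
  module

theorem backwardEuler_energy_le [DecidableEq ι] {C L : Matrix ι ι ℝ} (hL : L.IsSymm) {τ : ℝ}
    (hτ : 0 < τ) (hM : (C + (τ / 2) • L).PosDef) {a b p : ι → ℝ}
    (h : C *ᵥ (τ⁻¹ • (a - b)) + L *ᵥ a = p) :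
    a ⬝ᵥ L *ᵥ a ≤ b ⬝ᵥ L *ᵥ b + τ / 2 * (p ⬝ᵥ (C + (τ / 2) • L)⁻¹ *ᵥ p) := by
  set M := C + (τ / 2) • L
  set w := L *ᵥ ((2 : ℝ)⁻¹ • (a + b))
  have hv : τ⁻¹ • (a - b) = M⁻¹ *ᵥ (p - w) := by
    rw [← backwardEuler_mulVec_eq_sub_midpoint hτ.ne' h, mulVec_mulVec,
      nonsing_inv_mul _ ((isUnit_iff_isUnit_det _).mp hM.isUnit), one_mulVec]
  have henergy : a ⬝ᵥ L *ᵥ a - b ⬝ᵥ L *ᵥ b = 2 * τ * (w ⬝ᵥ M⁻¹ *ᵥ (p - w)) := by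
    rw [← hL.add_dotProduct_mulVec_sub, ← hv, dotProduct_comm w]
    simp only [w, mulVec_smul, dotProduct_smul, smul_dotProduct, smul_eq_mul,
      hL.dotProduct_mulVec_comm_s4 (a - b)]
    field_simp
  have hbound := hM.inv.posSemidef.four_mul_dotProduct_mulVec_sub_le w p
  nlinarith

theorem le_add_sum_Icc_of_le_add {α : Type*} [AddCommMonoid α] [PartialOrder α]
    [IsOrderedAddMonoid α] {E g : ℕ → α} (h : ∀ n, E (n + 1) ≤ E n + g (n + 1)) (n : ℕ) :
    E n ≤ E 0 + ∑ k ∈ Finset.Icc 1 n, g k := by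
  induction n with
  | zero => simp
  | succ n ih =>
    rw [Finset.sum_Icc_succ_top (Nat.le_add_left 1 n), ← add_assoc]
    exact (h n).trans (add_le_add_left ih _)

end

theorem backward_euler_unconditional_stability_general (N : ℕ)
    (C L : Matrix (Fin N) (Fin N) ℝ) (hC : C.PosDef) (hL : L.PosSemidef)
    (τ : ℝ) (hτ : 0 < τ)
    (u : ℕ → Fin N → ℝ) (f : ℕ → Fin N → ℝ)
    (heq : ∀ n : ℕ, 1 ≤ n →
      C *ᵥ (τ⁻¹ • (u n - u (n - 1))) + L *ᵥ u n = f n) :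
    ∀ n : ℕ, 1 ≤ n →
      u n ⬝ᵥ (L *ᵥ u n) ≤
        u 0 ⬝ᵥ (L *ᵥ u 0) +
          (τ / 2) * ∑ k ∈ Finset.Icc 1 n, f k ⬝ᵥ ((C + (τ / 2) • L)⁻¹ *ᵥ f k) := by
  have hM : (C + (τ / 2) • L).PosDef := hC.add_posSemidef (hL.smul (by positivity))
  have hLsymm : L.IsSymm := isHermitian_iff_isSymm.mp hL.isHermitian
  intro n _
  rw [Finset.mul_sum]
  refine le_add_sum_Icc_of_le_add (E := fun m => u m ⬝ᵥ L *ᵥ u m) (fun m => ?_) n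
  have hstep := heq (m + 1) (Nat.le_add_left 1 m)
  rw [Nat.add_sub_cancel] at hstep
  exact backwardEuler_energy_le hLsymm hτ hM hstep

/-- Unconditional stability of the fully discrete implicit scheme:
for every `n ≥ 1`, `‖uⁿ‖_L² ≤ ‖u⁰‖_L² + (τ/2) Σ_{k=1}^n (fᵏ)ᵀ (C + (τ/2)L)⁻¹ fᵏ`. -/
theorem backward_euler_unconditional_stability (N : ℕ) (hN : 1 ≤ N)
    (C L : Matrix (Fin N) (Fin N) ℝ) (hC : C.PosDef) (hL : L.PosSemidef)
    (τ : ℝ) (hτ : 0 < τ)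
    (u : ℕ → Fin N → ℝ) (f : ℕ → Fin N → ℝ)
    (heq : ∀ n : ℕ, 1 ≤ n →
      C *ᵥ (τ⁻¹ • (u n - u (n - 1))) + L *ᵥ u n = f n) :
    ∀ n : ℕ, 1 ≤ n →
      u n ⬝ᵥ (L *ᵥ u n) ≤
        u 0 ⬝ᵥ (L *ᵥ u 0) +
          (τ / 2) * ∑ k ∈ Finset.Icc 1 n, f k ⬝ᵥ ((C + (τ / 2) • L)⁻¹ *ᵥ f k) :=
  backward_euler_unconditional_stability_general N C L hC hL τ hτ u f heq
end

section
/- The Galerkin (multiscale) fully discrete solution is unconditionally stable: for every n ≥ 1, ‖u_msⁿ‖_L² ≤ ‖u_ms⁰‖_L² + (τ/2) Σ_{k=1}^n (fᵏ)ᵀ (C + (τ/2) L)⁻¹ fᵏ. -/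
/-!
Test the scheme at step `n` with the increment `w = uⁿ - uⁿ⁻¹ ∈ V`. By polarization
`2 wᵀ L uⁿ = ‖uⁿ‖_L² - ‖uⁿ⁻¹‖_L² + ‖w‖_L²`, so the tested equation reads
`(2/τ) ‖w‖²_{C + (τ/2) L} + ‖uⁿ‖_L² - ‖uⁿ⁻¹‖_L² = 2 wᵀ fⁿ`. Young's inequality in the
`(C + (τ/2) L)`-inner product bounds the right-hand side by
`(2/τ) ‖w‖²_{C + (τ/2) L} + (τ/2) (fⁿ)ᵀ (C + (τ/2) L)⁻¹ fⁿ`, which gives a one-step bound that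
telescopes.
-/

open Matrix

namespace Matrix

variable {ι : Type*} [Fintype ι]

theorem IsHermitian.dotProduct_mulVec_comm {L : Matrix ι ι ℝ} (hL : L.IsHermitian)
    (x y : ι → ℝ) : x ⬝ᵥ (L *ᵥ y) = y ⬝ᵥ (L *ᵥ x) := by
  rw [dotProduct_mulVec, dotProduct_comm, ← mulVec_transpose,
    ← conjTranspose_eq_transpose_of_trivial, hL.eq]

theorem IsHermitian.two_mul_sub_dotProduct_mulVec {L : Matrix ι ι ℝ} (hL : L.IsHermitian)
    (x y : ι → ℝ) :
    2 * ((x - y) ⬝ᵥ (L *ᵥ x)) =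
      x ⬝ᵥ (L *ᵥ x) - y ⬝ᵥ (L *ᵥ y) + (x - y) ⬝ᵥ (L *ᵥ (x - y)) := by
  have := hL.dotProduct_mulVec_comm x y
  simp only [mulVec_sub, sub_dotProduct, dotProduct_sub]
  linarith

theorem PosDef.two_mul_dotProduct_le [DecidableEq ι] {M : Matrix ι ι ℝ} (hM : M.PosDef)
    (x y : ι → ℝ) : 2 * (x ⬝ᵥ y) ≤ x ⬝ᵥ (M *ᵥ x) + y ⬝ᵥ (M⁻¹ *ᵥ y) := by
  set z := M⁻¹ *ᵥ y
  have hMz : M *ᵥ z = y := by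
    rw [mulVec_mulVec, mul_nonsing_inv _ ((isUnit_iff_isUnit_det M).mp hM.isUnit), one_mulVec]
  have hsq := hM.posSemidef.dotProduct_mulVec_nonneg (x - z)
  have hcomm := hM.isHermitian.dotProduct_mulVec_comm x z
  simp only [star_trivial, mulVec_sub, sub_dotProduct, dotProduct_sub, hMz] at hsq hcomm
  rw [dotProduct_comm z y] at hsq
  linarith

theorem energy_le_of_backwardEuler_step [DecidableEq ι] {C L : Matrix ι ι ℝ} (hC : C.PosDef)
    (hL : L.PosSemidef) {τ : ℝ} (hτ : 0 < τ) {u₀ u g : ι → ℝ}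
    (hstep : (u - u₀) ⬝ᵥ (C *ᵥ (τ⁻¹ • (u - u₀)) + L *ᵥ u - g) = 0) :
    u ⬝ᵥ (L *ᵥ u) ≤ u₀ ⬝ᵥ (L *ᵥ u₀) + τ / 2 * (g ⬝ᵥ ((C + (τ / 2) • L)⁻¹ *ᵥ g)) := by
  have hpolar := hL.isHermitian.two_mul_sub_dotProduct_mulVec u u₀
  have hyoung := (hC.add_posSemidef (hL.smul (half_pos hτ).le)).two_mul_dotProduct_le
    ((2 / τ) • (u - u₀)) g
  simp only [mulVec_smul, smul_mulVec, dotProduct_smul, smul_dotProduct, add_mulVec,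
    dotProduct_add, dotProduct_sub, smul_eq_mul] at hstep hyoung
  field_simp at hstep hyoung ⊢
  have hscaled : τ * (2 * (u ⬝ᵥ (L *ᵥ u))) ≤
      τ * (2 * (u₀ ⬝ᵥ (L *ᵥ u₀)) + τ * (g ⬝ᵥ ((C + (τ / 2) • L)⁻¹ *ᵥ g))) := by
    linear_combination hyoung + 4 * hstep - 2 * τ * hpolar
  exact le_of_mul_le_mul_left hscaled hτ

end Matrix

theorem le_add_sum_Icc_of_le_add_s10 {a b : ℕ → ℝ} (h : ∀ n, a (n + 1) ≤ a n + b (n + 1)) :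
    ∀ n, a n ≤ a 0 + ∑ k ∈ Finset.Icc 1 n, b k
  | 0 => by simp
  | n + 1 => by
    rw [Finset.sum_Icc_succ_top (by omega)]
    linarith [h n, le_add_sum_Icc_of_le_add_s10 h n]

theorem galerkin_backward_euler_stability_general (N : ℕ)
    (C L : Matrix (Fin N) (Fin N) ℝ) (hC : C.PosDef) (hL : L.PosSemidef)
    (V : Submodule ℝ (Fin N → ℝ)) (τ : ℝ) (hτ : 0 < τ)
    (ums : ℕ → Fin N → ℝ) (f : ℕ → Fin N → ℝ)
    (hmem : ∀ n, ums n ∈ V)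
    (hgal : ∀ n : ℕ, 1 ≤ n → ∀ v ∈ V,
      v ⬝ᵥ (C *ᵥ (τ⁻¹ • (ums n - ums (n - 1))) + L *ᵥ ums n - f n) = 0) :
    ∀ n : ℕ, 1 ≤ n →
      ums n ⬝ᵥ (L *ᵥ ums n) ≤
        ums 0 ⬝ᵥ (L *ᵥ ums 0) +
          (τ / 2) * ∑ k ∈ Finset.Icc 1 n, f k ⬝ᵥ ((C + (τ / 2) • L)⁻¹ *ᵥ f k) := by
  intro n _
  rw [Finset.mul_sum]
  refine le_add_sum_Icc_of_le_add_s10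
    (a := fun k => ums k ⬝ᵥ (L *ᵥ ums k)) (fun k => ?_) n
  exact energy_le_of_backwardEuler_step hC hL hτ
    (hgal (k + 1) k.succ_pos _ (sub_mem (hmem (k + 1)) (hmem k)))

/-- Unconditional stability of the Galerkin (multiscale) fully discrete
scheme: for every `n ≥ 1`,
`‖u_msⁿ‖_L² ≤ ‖u_ms⁰‖_L² + (τ/2) Σ_{k=1}^n (fᵏ)ᵀ (C + (τ/2)L)⁻¹ fᵏ`. -/
theorem galerkin_backward_euler_stability (N : ℕ) (hN : 1 ≤ N)
    (C L : Matrix (Fin N) (Fin N) ℝ) (hC : C.PosDef) (hL : L.PosSemidef)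
    (V : Submodule ℝ (Fin N → ℝ)) (τ : ℝ) (hτ : 0 < τ)
    (ums : ℕ → Fin N → ℝ) (f : ℕ → Fin N → ℝ)
    (hmem : ∀ n, ums n ∈ V)
    (hgal : ∀ n : ℕ, 1 ≤ n → ∀ v ∈ V,
      v ⬝ᵥ (C *ᵥ (τ⁻¹ • (ums n - ums (n - 1))) + L *ᵥ ums n - f n) = 0) :
    ∀ n : ℕ, 1 ≤ n →
      ums n ⬝ᵥ (L *ᵥ ums n) ≤
        ums 0 ⬝ᵥ (L *ᵥ ums 0) +
          (τ / 2) * ∑ k ∈ Finset.Icc 1 n, f k ⬝ᵥ ((C + (τ / 2) • L)⁻¹ *ᵥ f k) :=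
  galerkin_backward_euler_stability_general N C L hC hL V τ hτ ums f hmem hgal
end

section
/- Let w : [0,T] → V be continuously differentiable and set e(t) = w(t) − u_ms(t). Then for every t ∈ [0,T], ‖e(t)‖_C² + ∫_0^t ‖e(s)‖_L² ds ≤ e^t ( ‖e(0)‖_C² + ∫_0^t ( ‖w'(s) − u'(s)‖_C² + ‖w(s) − u(s)‖_L² ) ds ). -/
/-!
With `e = w - u_ms ∈ V`, Galerkin orthogonality lets `u_ms` be replaced by the fine-scale
solution `u` when testing against `e`: `eᵀ(C e' + L e) = eᵀ(C (w' - u') + L (w - u))`.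
Young's inequality in the `C`- and `L`-seminorms turns this into the differential inequality
`(‖e‖_C²)' + ‖e‖_L² ≤ ‖e‖_C² + ‖w' - u'‖_C² + ‖w - u‖_L²`, and an integrating factor `e^{-t}`
(Gronwall) integrates it.
-/

open Matrix Set

section Calculus

variable {X R ι : Type*} [TopologicalSpace X] [TopologicalSpace R] [Fintype ι] {s : Set X}

theorem ContinuousOn.dotProduct [Mul R] [AddCommMonoid R] [ContinuousAdd R] [ContinuousMul R]
    {u v : X → ι → R} (hu : ContinuousOn u s) (hv : ContinuousOn v s) :
    ContinuousOn (fun x => u x ⬝ᵥ v x) s :=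
  (continuous_fst.dotProduct continuous_snd).comp_continuousOn (hu.prodMk hv)

theorem ContinuousOn.matrix_mulVec {m : Type*} [NonUnitalNonAssocSemiring R] [ContinuousAdd R]
    [ContinuousMul R] (A : Matrix m ι R) {u : X → ι → R} (hu : ContinuousOn u s) :
    ContinuousOn (fun x => A *ᵥ u x) s :=
  (continuous_const.matrix_mulVec continuous_id).comp_continuousOn hu

variable {𝕜 : Type*} [NontriviallyNormedField 𝕜] {u v : 𝕜 → ι → 𝕜} {u' v' : ι → 𝕜}
  {S : Set 𝕜} {t : 𝕜}

theorem HasDerivWithinAt.dotProduct (hu : HasDerivWithinAt u u' S t)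
    (hv : HasDerivWithinAt v v' S t) :
    HasDerivWithinAt (fun τ => u τ ⬝ᵥ v τ) (u' ⬝ᵥ v t + u t ⬝ᵥ v') S t := by
  have hsum := HasDerivWithinAt.fun_sum (u := Finset.univ) fun i _ =>
    (hasDerivWithinAt_pi.1 hu i).fun_mul (hasDerivWithinAt_pi.1 hv i)
  rw [Finset.sum_add_distrib] at hsum
  exact hsum

theorem HasDerivWithinAt.matrix_mulVec {m : Type*} (A : Matrix m ι 𝕜)
    (hu : HasDerivWithinAt u u' S t) : HasDerivWithinAt (fun τ => A *ᵥ u τ) (A *ᵥ u') S t := by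
  refine hasDerivWithinAt_pi.2 fun i => ?_
  simpa [mulVec] using (hasDerivWithinAt_const t S (A i)).dotProduct hu

end Calculus

theorem hasDerivWithinAt_integral_Icc {E : Type*} [NormedAddCommGroup E] [NormedSpace ℝ E]
    [CompleteSpace E] {f : ℝ → E} {a b x : ℝ} (hf : ContinuousOn f (Icc a b))
    (hx : x ∈ Icc a b) :
    HasDerivWithinAt (fun τ => ∫ s in a..τ, f s) (f x) (Icc a b) x := by
  have : Fact (x ∈ Icc a b) := ⟨hx⟩
  exact intervalIntegral.integral_hasDerivWithinAt_right
    (hf.mono (uIcc_subset_Icc (left_mem_Icc.2 (hx.1.trans hx.2)) hx)).intervalIntegrable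
    (hf.stronglyMeasurableAtFilter_nhdsWithin measurableSet_Icc x) (hf x hx)

namespace Matrix

variable {n : Type*} [Fintype n]

theorem IsSymm.dotProduct_mulVec_comm_s12 {R : Type*} [CommSemiring R] {S : Matrix n n R}
    (hS : S.IsSymm) (a b : n → R) : a ⬝ᵥ S *ᵥ b = b ⬝ᵥ S *ᵥ a := by
  rw [dotProduct_mulVec, ← mulVec_transpose, hS.eq, dotProduct_comm]

variable {S : Matrix n n ℝ}

theorem PosSemidef.dotProduct_mulVec_self_nonneg (hS : S.PosSemidef) (a : n → ℝ) :
    0 ≤ a ⬝ᵥ S *ᵥ a := by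
  simpa using hS.dotProduct_mulVec_nonneg a

theorem PosSemidef.two_mul_dotProduct_mulVec_le (hS : S.PosSemidef) (a b : n → ℝ) :
    2 * (a ⬝ᵥ S *ᵥ b) ≤ a ⬝ᵥ S *ᵥ a + b ⬝ᵥ S *ᵥ b := by
  have hab := hS.dotProduct_mulVec_self_nonneg (a - b)
  have hsymm := (isHermitian_iff_isSymm.1 hS.1).dotProduct_mulVec_comm_s12 b a
  simp only [mulVec_sub, dotProduct_sub, sub_dotProduct] at hab
  linarith

end Matrix

theorem galerkin_orthogonality {n R : Type*} [Fintype n] [CommRing R] {C L : Matrix n n R}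
    {f x x' y y' z z' v : n → R} (hgal : v ⬝ᵥ (C *ᵥ x' + L *ᵥ x - f) = 0)
    (hy : C *ᵥ y' + L *ᵥ y = f) :
    v ⬝ᵥ (C *ᵥ (z' - x') + L *ᵥ (z - x)) = v ⬝ᵥ (C *ᵥ (z' - y') + L *ᵥ (z - y)) := by
  subst hy
  simp only [mulVec_sub, dotProduct_add, dotProduct_sub] at hgal ⊢
  linear_combination -hgal

theorem energy_inequality {n : Type*} [Fintype n] {C L : Matrix n n ℝ} (hC : C.PosSemidef)
    (hL : L.PosSemidef) {e e' d r : n → ℝ}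
    (herr : e ⬝ᵥ (C *ᵥ e' + L *ᵥ e) = e ⬝ᵥ (C *ᵥ d + L *ᵥ r)) :
    (e' ⬝ᵥ C *ᵥ e + e ⬝ᵥ C *ᵥ e') + e ⬝ᵥ L *ᵥ e ≤
      e ⬝ᵥ C *ᵥ e + (d ⬝ᵥ C *ᵥ d + r ⬝ᵥ L *ᵥ r) := by
  have hsymm := (isHermitian_iff_isSymm.1 hC.1).dotProduct_mulVec_comm_s12 e' e
  have hCd := hC.two_mul_dotProduct_mulVec_le e d
  have hLr := hL.two_mul_dotProduct_mulVec_le e r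
  simp only [dotProduct_add] at herr
  linarith

section Gronwall

open Real

variable {a b : ℝ} {h h' k g : ℝ → ℝ}

theorem antitoneOn_exp_neg_mul_add_integral_sub_integral
    (hh : ∀ x ∈ Icc a b, HasDerivWithinAt h (h' x) (Icc a b) x)
    (hk : ContinuousOn k (Icc a b)) (hg : ContinuousOn g (Icc a b))
    (hk0 : ∀ x ∈ Icc a b, 0 ≤ k x) (hbound : ∀ x ∈ Icc a b, h' x + k x ≤ h x + g x) :
    AntitoneOn (fun s => exp (-s) * (h s + ∫ σ in a..s, k σ) - ∫ σ in a..s, exp (-σ) * g σ)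
      (Icc a b) := by
  have hg' : ContinuousOn (fun σ => exp (-σ) * g σ) (Icc a b) := by fun_prop
  have hderiv : ∀ x ∈ Icc a b, HasDerivWithinAt
      (fun s => exp (-s) * (h s + ∫ σ in a..s, k σ) - ∫ σ in a..s, exp (-σ) * g σ)
      (exp (-x) * (h' x + k x - g x - (h x + ∫ σ in a..x, k σ))) (Icc a b) x := by
    intro x hx
    refine (((hasDerivAt_neg x).exp.hasDerivWithinAt.fun_mul
      ((hh x hx).fun_add (hasDerivWithinAt_integral_Icc hk hx))).fun_sub
      (hasDerivWithinAt_integral_Icc hg' hx)).congr_deriv ?_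
    ring
  refine antitoneOn_of_hasDerivWithinAt_nonpos (convex_Icc a b)
    (fun x hx => (hderiv x hx).continuousWithinAt)
    (fun x hx => (hderiv x (interior_subset hx)).mono interior_subset) fun x hx => ?_
  replace hx := interior_subset hx
  have hK : 0 ≤ ∫ σ in a..x, k σ :=
    intervalIntegral.integral_nonneg hx.1 fun σ hσ => hk0 σ ⟨hσ.1, hσ.2.trans hx.2⟩
  exact mul_nonpos_of_nonneg_of_nonpos (exp_pos _).le (by linarith [hbound x hx])

theorem add_integral_le_exp_mul_of_hasDerivWithinAt
    (hh : ∀ x ∈ Icc a b, HasDerivWithinAt h (h' x) (Icc a b) x)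
    (hk : ContinuousOn k (Icc a b)) (hg : ContinuousOn g (Icc a b))
    (hk0 : ∀ x ∈ Icc a b, 0 ≤ k x) (hg0 : ∀ x ∈ Icc a b, 0 ≤ g x)
    (hbound : ∀ x ∈ Icc a b, h' x + k x ≤ h x + g x) {t : ℝ} (ht : t ∈ Icc a b) :
    h t + ∫ s in a..t, k s ≤ exp (t - a) * (h a + ∫ s in a..t, g s) := by
  have hsub : uIcc a t ⊆ Icc a b := uIcc_subset_Icc (left_mem_Icc.2 (ht.1.trans ht.2)) ht
  have hΦ := antitoneOn_exp_neg_mul_add_integral_sub_integral hh hk hg hk0 hbound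
    (left_mem_Icc.2 (ht.1.trans ht.2)) ht ht.1
  simp only [intervalIntegral.integral_same, add_zero, sub_zero] at hΦ
  have hweighted : ∫ σ in a..t, exp (-σ) * g σ ≤ exp (-a) * ∫ σ in a..t, g σ := by
    rw [← intervalIntegral.integral_const_mul]
    refine intervalIntegral.integral_mono_on ht.1 ?_ ?_ fun σ hσ => ?_
    · exact (ContinuousOn.mul (by fun_prop) hg).mono hsub |>.intervalIntegrable
    · exact (continuousOn_const.mul hg).mono hsub |>.intervalIntegrable
    · exact mul_le_mul_of_nonneg_right (exp_le_exp.2 (neg_le_neg hσ.1))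
        (hg0 σ ⟨hσ.1, hσ.2.trans ht.2⟩)
  calc h t + ∫ s in a..t, k s = exp t * (exp (-t) * (h t + ∫ s in a..t, k s)) := by
        rw [← mul_assoc, ← exp_add, add_neg_cancel, exp_zero, one_mul]
    _ ≤ exp t * (exp (-a) * (h a + ∫ s in a..t, g s)) := by
        exact mul_le_mul_of_nonneg_left (by linarith) (exp_pos t).le
    _ = exp (t - a) * (h a + ∫ s in a..t, g s) := by rw [← mul_assoc, ← exp_add, sub_eq_add_neg]

end Gronwall

theorem galerkin_gronwall_estimate_general (N : ℕ)
    (C L : Matrix (Fin N) (Fin N) ℝ) (hC : C.PosDef) (hL : L.PosSemidef)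
    (V : Submodule ℝ (Fin N → ℝ)) (T : ℝ)
    (f u u' ums ums' w w' : ℝ → Fin N → ℝ)
    (hu' : ContinuousOn u' (Set.Icc 0 T))
    (huderiv : ∀ t ∈ Set.Icc (0 : ℝ) T, HasDerivWithinAt u (u' t) (Set.Icc 0 T) t)
    (hueq : ∀ t ∈ Set.Icc (0 : ℝ) T, C *ᵥ u' t + L *ᵥ u t = f t)
    (humsderiv : ∀ t ∈ Set.Icc (0 : ℝ) T, HasDerivWithinAt ums (ums' t) (Set.Icc 0 T) t)
    (humsmem : ∀ t ∈ Set.Icc (0 : ℝ) T, ums t ∈ V)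
    (hgal : ∀ t ∈ Set.Icc (0 : ℝ) T, ∀ v ∈ V,
      v ⬝ᵥ (C *ᵥ ums' t + L *ᵥ ums t - f t) = 0)
    (hw' : ContinuousOn w' (Set.Icc 0 T))
    (hwderiv : ∀ t ∈ Set.Icc (0 : ℝ) T, HasDerivWithinAt w (w' t) (Set.Icc 0 T) t)
    (hwmem : ∀ t ∈ Set.Icc (0 : ℝ) T, w t ∈ V) :
    ∀ t ∈ Set.Icc (0 : ℝ) T,
      (w t - ums t) ⬝ᵥ (C *ᵥ (w t - ums t)) +
          (∫ s in (0 : ℝ)..t, (w s - ums s) ⬝ᵥ (L *ᵥ (w s - ums s))) ≤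
        Real.exp t *
          ((w 0 - ums 0) ⬝ᵥ (C *ᵥ (w 0 - ums 0)) +
            ∫ s in (0 : ℝ)..t,
              ((w' s - u' s) ⬝ᵥ (C *ᵥ (w' s - u' s)) +
                (w s - u s) ⬝ᵥ (L *ᵥ (w s - u s)))) := by
  intro t ht
  have he x (hx : x ∈ Icc 0 T) :
      HasDerivWithinAt (fun s => w s - ums s) (w' x - ums' x) (Icc 0 T) x :=
    (hwderiv x hx).sub (humsderiv x hx)
  have hec : ContinuousOn (fun s => w s - ums s) (Icc 0 T) :=
    fun x hx => (he x hx).continuousWithinAt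
  have hwu : ContinuousOn (fun s => w s - u s) (Icc 0 T) :=
    fun x hx => ((hwderiv x hx).sub (huderiv x hx)).continuousWithinAt
  have hdwu : ContinuousOn (fun s => w' s - u' s) (Icc 0 T) := hw'.sub hu'
  simpa only [sub_zero, Pi.add_apply] using add_integral_le_exp_mul_of_hasDerivWithinAt
    (fun x hx => (he x hx).dotProduct ((he x hx).matrix_mulVec C))
    (hec.dotProduct (hec.matrix_mulVec L))
    ((hdwu.dotProduct (hdwu.matrix_mulVec C)).add (hwu.dotProduct (hwu.matrix_mulVec L)))
    (fun x _ => hL.dotProduct_mulVec_self_nonneg _)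
    (fun x _ => add_nonneg (hC.posSemidef.dotProduct_mulVec_self_nonneg _)
      (hL.dotProduct_mulVec_self_nonneg _))
    (fun x hx => energy_inequality hC.posSemidef hL
      (galerkin_orthogonality (hgal x hx _ (V.sub_mem (hwmem x hx) (humsmem x hx))) (hueq x hx)))
    ht

/-- Gronwall-type estimate. With `e(t) = w(t) − u_ms(t)`, for every
`t ∈ [0,T]`:
`‖e(t)‖_C² + ∫_0^t ‖e(s)‖_L² ds ≤ e^t (‖e(0)‖_C² + ∫_0^t (‖w'(s) − u'(s)‖_C² +
‖w(s) − u(s)‖_L²) ds)`. -/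
theorem galerkin_gronwall_estimate (N : ℕ) (hN : 1 ≤ N)
    (C L : Matrix (Fin N) (Fin N) ℝ) (hC : C.PosDef) (hL : L.PosSemidef)
    (V : Submodule ℝ (Fin N → ℝ)) (T : ℝ) (hT : 0 < T)
    (f u u' ums ums' w w' : ℝ → Fin N → ℝ)
    (hf : ContinuousOn f (Set.Icc 0 T))
    (hu' : ContinuousOn u' (Set.Icc 0 T))
    (huderiv : ∀ t ∈ Set.Icc (0 : ℝ) T, HasDerivWithinAt u (u' t) (Set.Icc 0 T) t)
    (hueq : ∀ t ∈ Set.Icc (0 : ℝ) T, C *ᵥ u' t + L *ᵥ u t = f t)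
    (hums' : ContinuousOn ums' (Set.Icc 0 T))
    (humsderiv : ∀ t ∈ Set.Icc (0 : ℝ) T, HasDerivWithinAt ums (ums' t) (Set.Icc 0 T) t)
    (humsmem : ∀ t ∈ Set.Icc (0 : ℝ) T, ums t ∈ V)
    (hgal : ∀ t ∈ Set.Icc (0 : ℝ) T, ∀ v ∈ V,
      v ⬝ᵥ (C *ᵥ ums' t + L *ᵥ ums t - f t) = 0)
    (hw' : ContinuousOn w' (Set.Icc 0 T))
    (hwderiv : ∀ t ∈ Set.Icc (0 : ℝ) T, HasDerivWithinAt w (w' t) (Set.Icc 0 T) t)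
    (hwmem : ∀ t ∈ Set.Icc (0 : ℝ) T, w t ∈ V) :
    ∀ t ∈ Set.Icc (0 : ℝ) T,
      (w t - ums t) ⬝ᵥ (C *ᵥ (w t - ums t)) +
          (∫ s in (0 : ℝ)..t, (w s - ums s) ⬝ᵥ (L *ᵥ (w s - ums s))) ≤
        Real.exp t *
          ((w 0 - ums 0) ⬝ᵥ (C *ᵥ (w 0 - ums 0)) +
            ∫ s in (0 : ℝ)..t,
              ((w' s - u' s) ⬝ᵥ (C *ᵥ (w' s - u' s)) +
                (w s - u s) ⬝ᵥ (L *ᵥ (w s - u s)))) :=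
  galerkin_gronwall_estimate_general N C L hC hL V T f u u' ums ums' w w' hu' huderiv hueq humsderiv
    humsmem hgal hw' hwderiv hwmem
end

section
/- Let wⁿ ∈ V be arbitrary and set eⁿ = wⁿ − u_msⁿ. Then one step of the Galerkin backward Euler scheme satisfies the error inequality ‖eⁿ‖_C² + τ ‖eⁿ‖_L² ≤ 2 ‖uⁿ⁻¹ − u_msⁿ⁻¹‖_C² + 2 ‖wⁿ − uⁿ‖_C² + τ ‖wⁿ − uⁿ‖_L². -/
open Matrix

/-!
Testing the Galerkin relation with `eⁿ = wⁿ − u_msⁿ ∈ V` and subtracting the fine-scale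
relation gives the error identity
`‖eⁿ‖_C² + τ ‖eⁿ‖_L² = eⁿᵀ C (ε + η) + τ eⁿᵀ L η`, where `ε = uⁿ⁻¹ − u_msⁿ⁻¹` and
`η = wⁿ − uⁿ`. Young's inequality `2 xᵀ M y ≤ xᵀ M x + yᵀ M y` for the positive semidefinite
forms `C` and `L` absorbs `eⁿ` into the left-hand side, and `‖ε + η‖_C² ≤ 2 ‖ε‖_C² + 2 ‖η‖_C²`
finishes the estimate.
-/

namespace Matrix

variable {n : Type*} [Fintype n] {M : Matrix n n ℝ}

lemma IsHermitian.dotProduct_mulVec_comm_s14 (hM : M.IsHermitian) (x y : n → ℝ) :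
    x ⬝ᵥ (M *ᵥ y) = y ⬝ᵥ (M *ᵥ x) := by
  rw [dotProduct_mulVec, ← mulVec_transpose, ← conjTranspose_eq_transpose_of_trivial, hM.eq,
    dotProduct_comm]

lemma PosSemidef.dotProduct_mulVec_self_nonneg_s14 (hM : M.PosSemidef) (x : n → ℝ) :
    0 ≤ x ⬝ᵥ (M *ᵥ x) := by
  simpa using hM.dotProduct_mulVec_nonneg x

lemma PosSemidef.two_mul_dotProduct_mulVec_le_s14 (hM : M.PosSemidef) (x y : n → ℝ) :
    2 * (x ⬝ᵥ (M *ᵥ y)) ≤ x ⬝ᵥ (M *ᵥ x) + y ⬝ᵥ (M *ᵥ y) := by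
  have hxy := hM.dotProduct_mulVec_self_nonneg_s14 (x - y)
  have hsymm := hM.isHermitian.dotProduct_mulVec_comm_s14 x y
  simp only [mulVec_sub, dotProduct_sub, sub_dotProduct] at hxy
  linarith

lemma PosSemidef.dotProduct_mulVec_add_self_le (hM : M.PosSemidef) (x y : n → ℝ) :
    (x + y) ⬝ᵥ (M *ᵥ (x + y)) ≤ 2 * (x ⬝ᵥ (M *ᵥ x)) + 2 * (y ⬝ᵥ (M *ᵥ y)) := by
  have hyoung := hM.two_mul_dotProduct_mulVec_le_s14 x y
  have hsymm := hM.isHermitian.dotProduct_mulVec_comm_s14 x y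
  simp only [mulVec_add, dotProduct_add, add_dotProduct]
  linarith

end Matrix

lemma galerkin_backward_euler_error_orthogonal {n : Type*} [Fintype n]
    {C L : Matrix n n ℝ} {V : Submodule ℝ (n → ℝ)} {τ : ℝ} (hτ : τ ≠ 0)
    {uPrev uCur fn umsPrev umsCur : n → ℝ}
    (hfine : C *ᵥ (τ⁻¹ • (uCur - uPrev)) + L *ᵥ uCur = fn)
    (hgal : ∀ v ∈ V,
      v ⬝ᵥ (C *ᵥ (τ⁻¹ • (umsCur - umsPrev)) + L *ᵥ umsCur - fn) = 0)
    {v : n → ℝ} (hv : v ∈ V) :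
    v ⬝ᵥ (C *ᵥ (umsCur - umsPrev - (uCur - uPrev))) +
      τ * (v ⬝ᵥ (L *ᵥ (umsCur - uCur))) = 0 := by
  have h := hgal v hv
  rw [← hfine] at h
  simp only [mulVec_smul, mulVec_sub, dotProduct_add, dotProduct_sub, dotProduct_smul,
    smul_eq_mul] at h ⊢
  field_simp at h
  linear_combination h

lemma backward_euler_error_estimate {n : Type*} [Fintype n] {C L : Matrix n n ℝ}
    (hC : C.PosSemidef) (hL : L.PosSemidef) {τ : ℝ} (hτ : 0 ≤ τ) {e ε η : n → ℝ}
    (herror : e ⬝ᵥ (C *ᵥ (ε + η - e)) + τ * (e ⬝ᵥ (L *ᵥ (η - e))) = 0) :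
    e ⬝ᵥ (C *ᵥ e) + τ * (e ⬝ᵥ (L *ᵥ e)) ≤
      2 * (ε ⬝ᵥ (C *ᵥ ε)) + 2 * (η ⬝ᵥ (C *ᵥ η)) + τ * (η ⬝ᵥ (L *ᵥ η)) := by
  have hyoungC := hC.two_mul_dotProduct_mulVec_le_s14 e (ε + η)
  have hyoungL := mul_le_mul_of_nonneg_left (hL.two_mul_dotProduct_mulVec_le_s14 e η) hτ
  have hsumC := hC.dotProduct_mulVec_add_self_le ε η
  simp only [mulVec_sub, dotProduct_sub] at herror
  linarith

theorem galerkin_backward_euler_one_step_error_general (N : ℕ)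
    (C L : Matrix (Fin N) (Fin N) ℝ) (hC : C.PosDef) (hL : L.PosSemidef)
    (V : Submodule ℝ (Fin N → ℝ)) (τ : ℝ) (hτ : 0 < τ)
    (uPrev uCur fn : Fin N → ℝ)
    (hfine : C *ᵥ (τ⁻¹ • (uCur - uPrev)) + L *ᵥ uCur = fn)
    (umsPrev umsCur : Fin N → ℝ)
    (humsCur : umsCur ∈ V)
    (hgal : ∀ v ∈ V,
      v ⬝ᵥ (C *ᵥ (τ⁻¹ • (umsCur - umsPrev)) + L *ᵥ umsCur - fn) = 0)
    (wn : Fin N → ℝ) (hwn : wn ∈ V) :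
    (wn - umsCur) ⬝ᵥ (C *ᵥ (wn - umsCur)) +
        τ * ((wn - umsCur) ⬝ᵥ (L *ᵥ (wn - umsCur))) ≤
      2 * ((uPrev - umsPrev) ⬝ᵥ (C *ᵥ (uPrev - umsPrev))) +
        2 * ((wn - uCur) ⬝ᵥ (C *ᵥ (wn - uCur))) +
          τ * ((wn - uCur) ⬝ᵥ (L *ᵥ (wn - uCur))) := by
  apply backward_euler_error_estimate hC.posSemidef hL hτ.le
  have h := galerkin_backward_euler_error_orthogonal hτ.ne' hfine hgal (V.sub_mem hwn humsCur)
  rwa [show umsCur - umsPrev - (uCur - uPrev) =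
      (uPrev - umsPrev) + (wn - uCur) - (wn - umsCur) by abel,
    show umsCur - uCur = (wn - uCur) - (wn - umsCur) by abel] at h

/-- One-step error inequality for the Galerkin backward Euler scheme:
with `eⁿ = wⁿ − u_msⁿ`,
`‖eⁿ‖_C² + τ ‖eⁿ‖_L² ≤ 2 ‖uⁿ⁻¹ − u_msⁿ⁻¹‖_C² + 2 ‖wⁿ − uⁿ‖_C² + τ ‖wⁿ − uⁿ‖_L²`. -/
theorem galerkin_backward_euler_one_step_error (N : ℕ) (hN : 1 ≤ N)
    (C L : Matrix (Fin N) (Fin N) ℝ) (hC : C.PosDef) (hL : L.PosSemidef)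
    (V : Submodule ℝ (Fin N → ℝ)) (τ : ℝ) (hτ : 0 < τ)
    (uPrev uCur fn : Fin N → ℝ)
    (hfine : C *ᵥ (τ⁻¹ • (uCur - uPrev)) + L *ᵥ uCur = fn)
    (umsPrev umsCur : Fin N → ℝ)
    (humsPrev : umsPrev ∈ V) (humsCur : umsCur ∈ V)
    (hgal : ∀ v ∈ V,
      v ⬝ᵥ (C *ᵥ (τ⁻¹ • (umsCur - umsPrev)) + L *ᵥ umsCur - fn) = 0)
    (wn : Fin N → ℝ) (hwn : wn ∈ V) :
    (wn - umsCur) ⬝ᵥ (C *ᵥ (wn - umsCur)) +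
        τ * ((wn - umsCur) ⬝ᵥ (L *ᵥ (wn - umsCur))) ≤
      2 * ((uPrev - umsPrev) ⬝ᵥ (C *ᵥ (uPrev - umsPrev))) +
        2 * ((wn - uCur) ⬝ᵥ (C *ᵥ (wn - uCur))) +
          τ * ((wn - uCur) ⬝ᵥ (L *ᵥ (wn - uCur))) :=
  galerkin_backward_euler_one_step_error_general N C L hC hL V τ hτ uPrev uCur fn hfine umsPrev
    umsCur humsCur hgal wn hwn
end
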